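/- Every right resolver between finite graphs admits a maximal synchronized set: for any right resolver Φ: G → H between finite graphs and any vertex I' of G, there exists a path w in H ending at ∂Φ(I') such that w ·_Φ I' is a maximal synchronized set. -/
import Mathlib


/-- A finite directed multigraph. -/
structure MGraph where
  V : Type
  E : Type
  [fV : Fintype V]
  [fE : Fintype E]
  src : E → V
  tgt : E → V

attribute [instance] MGraph.fV MGraph.fE

namespace MGraph

/-- `G.IsPathFrom I w` : the list of edges `w` is a path starting at `I`. -/
def IsPathFrom (G : MGraph) : G.V → List G.E → Prop
  | _, [] => True
  | I, e :: es => G.src e = I ∧ G.IsPathFrom (G.tgt e) es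

/-- Terminal vertex of the path `w` starting at `I`. -/
def pathEnd (G : MGraph) : G.V → List G.E → G.V
  | I, [] => I
  | _, e :: es => G.pathEnd (G.tgt e) es

def StronglyConnected (G : MGraph) : Prop :=
  ∀ I J : G.V, ∃ w : List G.E, G.IsPathFrom I w ∧ G.pathEnd I w = J

/-- Graph homomorphism. -/
structure Hom (G H : MGraph) where
  vmap : G.V → H.V
  emap : G.E → H.E
  src_map : ∀ e, H.src (emap e) = vmap (G.src e)
  tgt_map : ∀ e, H.tgt (emap e) = vmap (G.tgt e)

/-- Right resolving: surjective, and a bijection on outgoing edge sets. -/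
def Hom.RightResolving {G H : MGraph} (Φ : Hom G H) : Prop :=
  Function.Surjective Φ.vmap ∧
  ∀ I : G.V, Set.BijOn Φ.emap {e | G.src e = I} {f | H.src f = Φ.vmap I}

/-- Left resolving: surjective, and a bijection on incoming edge sets. -/
def Hom.LeftResolving {G H : MGraph} (Φ : Hom G H) : Prop :=
  Function.Surjective Φ.vmap ∧
  ∀ I : G.V, Set.BijOn Φ.emap {e | G.tgt e = I} {f | H.tgt f = Φ.vmap I}

def Hom.BiResolving {G H : MGraph} (Φ : Hom G H) : Prop :=
  Φ.RightResolving ∧ Φ.LeftResolving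

/-- Forward action: terminal vertices of lifts of `w` starting in `U`. -/
def Hom.fwd {G H : MGraph} (Φ : Hom G H) (U : Set G.V) (w : List H.E) : Set G.V :=
  {J' | ∃ I' ∈ U, ∃ π : List G.E,
    G.IsPathFrom I' π ∧ π.map Φ.emap = w ∧ G.pathEnd I' π = J'}

/-- Backward action: starting vertices whose lift of `w` ends in `S`. -/
def Hom.bwd {G H : MGraph} (Φ : Hom G H) (w : List H.E) (S : Set G.V) : Set G.V :=
  {J' | ∃ π : List G.E,
    G.IsPathFrom J' π ∧ π.map Φ.emap = w ∧ G.pathEnd J' π ∈ S}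

end MGraph

open MGraph


/-- `S` is a synchronized set of `Φ` over the vertex `J` of `H`:
`S = u ·_Φ I₀` for some path `u` in `H` from `J` to `∂Φ(I₀)`. -/
def MGraph.Hom.Synced {G H : MGraph} (Φ : MGraph.Hom G H) (J : H.V) (S : Set G.V) : Prop :=
  ∃ (u : List H.E) (I₀ : G.V),
    H.IsPathFrom J u ∧ H.pathEnd J u = Φ.vmap I₀ ∧ S = Φ.bwd u {I₀}

/-- `S` is a maximal synchronized set (MSS) of `Φ` over `J`: a synchronized set such
that `|v ·_Φ S| ≤ |S|` for every path `v` in `H` ending at `J`. -/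
def MGraph.Hom.IsMSS {G H : MGraph} (Φ : MGraph.Hom G H) (J : H.V) (S : Set G.V) : Prop :=
  Φ.Synced J S ∧
  ∀ (K : H.V) (v : List H.E), H.IsPathFrom K v → H.pathEnd K v = J →
    (Φ.bwd v S).ncard ≤ S.ncard

lemma isPathFrom_append {G : MGraph} (I : G.V) (a b : List G.E) :
    G.IsPathFrom I (a ++ b) ↔ G.IsPathFrom I a ∧ G.IsPathFrom (G.pathEnd I a) b := by
  induction a generalizing I with
  | nil => simp [MGraph.IsPathFrom, MGraph.pathEnd]
  | cons e es ih => simp [MGraph.IsPathFrom, MGraph.pathEnd, ih, and_assoc]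

lemma pathEnd_append {G : MGraph} (I : G.V) (a b : List G.E) :
    G.pathEnd I (a ++ b) = G.pathEnd (G.pathEnd I a) b := by
  induction a generalizing I with
  | nil => rfl
  | cons e es ih => simp [MGraph.pathEnd, ih]

lemma bwd_append {G H : MGraph} (Φ : MGraph.Hom G H) (v w : List H.E) (S : Set G.V) :
    Φ.bwd (v ++ w) S = Φ.bwd v (Φ.bwd w S) := by
  ext J'
  constructor
  · rintro ⟨π, hπ, hmap, hend⟩
    obtain ⟨π₁, π₂, rfl, h1, h2⟩ := List.map_eq_append_iff.mp hmap
    rw [isPathFrom_append] at hπ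
    exact ⟨π₁, hπ.1, h1, π₂, hπ.2, h2, by rw [pathEnd_append] at hend; exact hend⟩
  · rintro ⟨π₁, h1, hm1, π₂, h2, hm2, hend⟩
    exact ⟨π₁ ++ π₂, (isPathFrom_append _ _ _).mpr ⟨h1, h2⟩,
      by simp [hm1, hm2], by rw [pathEnd_append]; exact hend⟩

/-- Every right resolver between finite graphs admits a maximal
synchronized set: for every vertex I' of G there is a path w in H ending at ∂Φ(I')
such that w ·_Φ I' is an MSS. -/
theorem exists_mss {G H : MGraph} (Φ : MGraph.Hom G H) (hΦ : Φ.RightResolving)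
    (I' : G.V) :
    ∃ (K : H.V) (w : List H.E), H.IsPathFrom K w ∧ H.pathEnd K w = Φ.vmap I' ∧
      Φ.IsMSS K (Φ.bwd w {I'}) := by
  classical
  set N : Set ℕ := {n | ∃ (K : H.V) (w : List H.E), H.IsPathFrom K w ∧
      H.pathEnd K w = Φ.vmap I' ∧ (Φ.bwd w {I'}).ncard = n} with hN
  have hne : N.Nonempty := ⟨(Φ.bwd [] {I'}).ncard, Φ.vmap I', [], trivial, rfl, rfl⟩
  have hbdd : BddAbove N := by
    refine ⟨Fintype.card G.V, ?_⟩
    rintro n ⟨K, w, _, _, rfl⟩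
    calc (Φ.bwd w {I'}).ncard ≤ (Set.univ : Set G.V).ncard :=
          Set.ncard_le_ncard (Set.subset_univ _) Set.finite_univ
      _ = Fintype.card G.V := by rw [Set.ncard_univ, Nat.card_eq_fintype_card]
  obtain ⟨K, w, hw, hwe, hcard⟩ := Nat.sSup_mem hne hbdd
  refine ⟨K, w, hw, hwe, ⟨w, I', hw, hwe, rfl⟩, ?_⟩
  intro L v hv hve
  rw [← bwd_append]
  rw [hcard]
  apply le_csSup hbdd
  refine ⟨L, v ++ w, (isPathFrom_append _ _ _).mpr ⟨hv, hve ▸ hw⟩, ?_, rfl⟩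
  rw [pathEnd_append, hve, hwe]
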